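/- Let d ≥ 2 be an integer. For each i let (ℓ₁ⁱ, …, ℓ_dⁱ) be a full sibling collection, i.e., d pairwise disjoint chords with σ_d(ℓ₁ⁱ) = … = σ_d(ℓ_dⁱ). Suppose that for each j = 1, …, d the chords ℓ_jⁱ converge to a chord ℓ_j in the Hausdorff metric as i → ∞, and suppose ℓ₁ is not critical. Then (ℓ₁, …, ℓ_d) is a full sibling collection: the chords ℓ₁, …, ℓ_d are pairwise disjoint and σ_d(ℓ₁) = … = σ_d(ℓ_d). -/

import Mathlib

open Metric Set Filter

noncomputable section

/-- Angles: the circle `ℝ/ℤ`. -/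
abbrev Angle : Type := AddCircle (1 : ℝ)

/-- The angle map `σ_d : t ↦ d·t` on `ℝ/ℤ`. -/
def sigmaA (d : ℕ) : Angle → Angle := fun a => d • a

/-- The point `exp(2πi a)` of the unit circle in the plane `ℂ` corresponding to an angle. -/
def anglePoint (a : Angle) : ℂ := (AddCircle.toCircle a : ℂ)

/-- A chord is (determined by) an unordered pair of angles; it is degenerate iff
the pair is diagonal. -/
abbrev Chord : Type := Sym2 Angle

/-- The chord as a subset of the plane: the closed segment joining the two
corresponding points of the unit circle. -/
def chordSet (c : Chord) : Set ℂ :=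
  Sym2.lift ⟨fun a b => segment ℝ (anglePoint a) (anglePoint b),
    fun a b => segment_symm ℝ (anglePoint a) (anglePoint b)⟩ c

/-- The image `σ_d(ℓ)` of a chord: the chord on the images of the endpoint angles. -/
def chordMap (d : ℕ) : Chord → Chord := Sym2.map (sigmaA d)

/-- A chord is `σ_d`-critical if its image is degenerate. -/
def ChordCritical (d : ℕ) (c : Chord) : Prop := (chordMap d c).IsDiag

/-- The open unit disk in the plane. -/
def openDisk : Set ℂ := Metric.ball 0 1

/-- Two (distinct) chords cross if they intersect in the open unit disk. -/
def Cross (c₁ c₂ : Chord) : Prop :=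
  c₁ ≠ c₂ ∧ (chordSet c₁ ∩ chordSet c₂ ∩ openDisk).Nonempty

/-- The length of a chord: the length of the shorter arc between its endpoint
angles, normalized so that the whole circle has length `1` (this is exactly
the distance in `ℝ/ℤ`). -/
def chordLength (c : Chord) : ℝ :=
  Sym2.lift ⟨fun a b => dist a b, fun a b => dist_comm a b⟩ c

/-- The Hausdorff distance between two chords, regarded as compact subsets of the
plane. -/
def chordDist (c₁ c₂ : Chord) : ℝ := hausdorffDist (chordSet c₁) (chordSet c₂)

/-- A lamination: a family of chords (leaves) such that no two distinct leaves cross,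
every point of the unit circle is a degenerate leaf, and the union of all leaves is a
compact subset of the plane. -/
structure Lamination where
  leaves : Set Chord
  no_cross : ∀ c₁ ∈ leaves, ∀ c₂ ∈ leaves, ¬ Cross c₁ c₂
  circle_deg : ∀ a : Angle, Sym2.diag a ∈ leaves
  compact_union : IsCompact (⋃ c ∈ leaves, chordSet c)

/-- The union `Λ⁺` of all leaves of a lamination. -/
def lamPlus (Λ : Lamination) : Set ℂ := ⋃ c ∈ Λ.leaves, chordSet c

/-- A full sibling collection: `d` pairwise disjoint chords with equal `σ_d`-images. -/
def FullSibling (d : ℕ) (L : Fin d → Chord) : Prop :=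
  (∀ i j, i ≠ j → Disjoint (chordSet (L i)) (chordSet (L j))) ∧
  ∀ i j, chordMap d (L i) = chordMap d (L j)

/-- Sibling `σ_d`-invariance of a lamination. -/
structure SiblingInvariant (d : ℕ) (Λ : Lamination) : Prop where
  forward : ∀ c ∈ Λ.leaves, chordMap d c ∈ Λ.leaves
  pullback : ∀ c ∈ Λ.leaves, ∃ c' ∈ Λ.leaves, chordMap d c' = c
  sibling : ∀ c ∈ Λ.leaves, ¬ ChordCritical d c →
    ∃ L : Fin d → Chord, (∀ i, L i ∈ Λ.leaves) ∧ (∃ i, L i = c) ∧ FullSibling d L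

/-- A lamination is nonempty if it has a nondegenerate leaf. -/
def LamNonempty (Λ : Lamination) : Prop := ∃ c ∈ Λ.leaves, ¬ c.IsDiag

/-- A chief: a nonempty sibling `σ_d`-invariant lamination that is minimal by
inclusion among nonempty sibling `σ_d`-invariant laminations. -/
def IsChief (d : ℕ) (Λ : Lamination) : Prop :=
  SiblingInvariant d Λ ∧ LamNonempty Λ ∧
  ∀ Λ' : Lamination, SiblingInvariant d Λ' → LamNonempty Λ' →
    Λ'.leaves ⊆ Λ.leaves → Λ'.leaves = Λ.leaves

/-- A chord `c` is an isolated leaf of `Λ` if it is not the limit (in the Hausdorff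
metric on compact subsets of the plane) of a sequence of leaves of `Λ` distinct
from `c`. -/
def IsIsolatedLeaf (Λ : Lamination) (c : Chord) : Prop :=
  ¬ ∃ f : ℕ → Chord, (∀ n, f n ∈ Λ.leaves ∧ f n ≠ c) ∧
      Tendsto (fun n => chordDist (f n) c) atTop (nhds 0)

/-- A lamination is perfect if none of its leaves is isolated. -/
def LamPerfect (Λ : Lamination) : Prop := ∀ c ∈ Λ.leaves, ¬ IsIsolatedLeaf Λ c

/-- A gap of `Λ`: the closure of a connected component of `𝔻 ∖ Λ⁺`. -/
def IsGap (Λ : Lamination) (G : Set ℂ) : Prop :=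
  ∃ x ∈ openDisk \ lamPlus Λ,
    G = closure (connectedComponentIn (openDisk \ lamPlus Λ) x)

/-- The set of angles whose circle points lie in `G` (i.e. `G ∩ 𝕊¹` as angles). -/
def gapAngles (G : Set ℂ) : Set Angle := {a | anglePoint a ∈ G}

/-- `σ_d(G)` for a gap or leaf `G`: the convex hull of `σ_d(G ∩ 𝕊¹)`. -/
def gapImage (d : ℕ) (G : Set ℂ) : Set ℂ :=
  convexHull ℝ (anglePoint '' (sigmaA d '' gapAngles G))

/-- A gap (as a subset of the plane) is finite if it meets the circle in finitely
many points. -/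
def FiniteGapSet (G : Set ℂ) : Prop := (gapAngles G).Finite

/-- A gap is infinite if it meets the circle in infinitely many points. -/
def InfiniteGapSet (G : Set ℂ) : Prop := (gapAngles G).Infinite

/-- A chord `e` is an edge of `G` if (as a segment) it is a maximal straight segment
contained in the boundary of `G`. -/
def IsEdge (G : Set ℂ) (e : Chord) : Prop :=
  ¬ e.IsDiag ∧ chordSet e ⊆ frontier G ∧
  ∀ e' : Chord, chordSet e ⊆ chordSet e' → chordSet e' ⊆ frontier G → e' = e

/-- `G` has a `σ_d`-critical edge. -/
def HasCriticalEdge (d : ℕ) (G : Set ℂ) : Prop :=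
  ∃ e : Chord, ChordCritical d e ∧ IsEdge G e

/-- A lap of `Λ`: a finite gap, or (the underlying set of) a nondegenerate leaf not
contained in the boundary of a finite gap. -/
def IsLap (Λ : Lamination) (G : Set ℂ) : Prop :=
  (IsGap Λ G ∧ FiniteGapSet G) ∨
  (∃ c ∈ Λ.leaves, ¬ c.IsDiag ∧ G = chordSet c ∧
     ∀ H : Set ℂ, IsGap Λ H → FiniteGapSet H → ¬ G ⊆ frontier H)

/-- A gap/lap is invariant if `σ_d(G) = G`. -/
def GapInvariant (d : ℕ) (G : Set ℂ) : Prop := gapImage d G = G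

/-- A gap/lap is periodic if `σ_d^n(G) = G` for some `n ≥ 1`. -/
def GapPeriodic (d : ℕ) (G : Set ℂ) : Prop := ∃ n, 1 ≤ n ∧ (gapImage d)^[n] G = G

/-- A gap/lap is periodic of (exact) period `n`. -/
def GapPeriod (d n : ℕ) (G : Set ℂ) : Prop :=
  1 ≤ n ∧ (gapImage d)^[n] G = G ∧ ∀ m, 1 ≤ m → m < n → (gapImage d)^[m] G ≠ G

/-- Non-strict cyclic betweenness on the circle `ℝ/ℤ`. -/
def BtwA (a b c : Angle) : Prop :=
  ∃ x y z : ℝ, (x : Angle) = a ∧ (y : Angle) = b ∧ (z : Angle) = c ∧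
    x ≤ y ∧ y ≤ z ∧ z ≤ x + 1

/-- A `k`-periodic gap `G` has degree one: `σ_d^k` maps `G ∩ 𝕊¹` onto itself
preserving the non-strict cyclic order of the circle. -/
def DegreeOneOn (d k : ℕ) (G : Set ℂ) : Prop :=
  (sigmaA d)^[k] '' gapAngles G = gapAngles G ∧
  ∀ a ∈ gapAngles G, ∀ b ∈ gapAngles G, ∀ c ∈ gapAngles G,
    BtwA a b c → BtwA ((sigmaA d)^[k] a) ((sigmaA d)^[k] b) ((sigmaA d)^[k] c)

/-- An angle is `σ_d`-periodic. -/
def AnglePeriodic (d : ℕ) (x : Angle) : Prop := ∃ n, 1 ≤ n ∧ (sigmaA d)^[n] x = x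

/-- An angle is `σ_d`-preperiodic. -/
def AnglePreperiodic (d : ℕ) (x : Angle) : Prop :=
  ∃ m : ℕ, AnglePeriodic d ((sigmaA d)^[m] x)

/-- Two subsets of the plane share an edge. -/
def SharesEdge (G H : Set ℂ) : Prop := ∃ e : Chord, IsEdge G e ∧ IsEdge H e

/-- A flower-like set of a cubic sibling `σ₃`-invariant lamination `Λ`: either `{U}`
for an infinite invariant gap `U` of `Λ`, or, given an invariant lap `G` of `Λ` such
that some infinite gap of `Λ` shares an edge with `G`, the collection consisting of
`G` together with all periodic infinite gaps of `Λ` sharing an edge with `G`. -/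
def IsFlowerLike (Λ : Lamination) (F : Set (Set ℂ)) : Prop :=
  (∃ U, IsGap Λ U ∧ InfiniteGapSet U ∧ GapInvariant 3 U ∧ F = {U}) ∨
  (∃ G, IsLap Λ G ∧ GapInvariant 3 G ∧
    (∃ H, IsGap Λ H ∧ InfiniteGapSet H ∧ SharesEdge G H) ∧
    F = insert G {H | IsGap Λ H ∧ InfiniteGapSet H ∧ GapPeriodic 3 H ∧ SharesEdge G H})

/-- A lamination is compatible with a flower-like set `F` if no leaf of the
lamination crosses an edge of a gap from `F`. -/
def CompatibleWithFlower (Λ : Lamination) (F : Set (Set ℂ)) : Prop :=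
  ∀ c ∈ Λ.leaves, ∀ G ∈ F, ∀ e : Chord, IsEdge G e → ¬ Cross c e

/-- A central chief: a cubic chief compatible with some flower-like set of some
cubic sibling `σ₃`-invariant lamination. -/
def CentralChief (Λ : Lamination) : Prop :=
  IsChief 3 Λ ∧ ∃ (Λ' : Lamination) (F : Set (Set ℂ)),
    SiblingInvariant 3 Λ' ∧ IsFlowerLike Λ' F ∧ CompatibleWithFlower Λ F

/-- A cubic critical portrait: an (unordered) pair of non-crossing nondegenerate
`σ₃`-critical chords. -/
structure CritPortrait where
  c1 : Chord
  c2 : Chord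
  nd1 : ¬ c1.IsDiag
  nd2 : ¬ c2.IsDiag
  crit1 : ChordCritical 3 c1
  crit2 : ChordCritical 3 c2
  nocross : ¬ Cross c1 c2

/-- A critical portrait is compatible with a lamination if neither of its chords
crosses any leaf. -/
def PortraitCompatible (K : CritPortrait) (Λ : Lamination) : Prop :=
  ∀ c ∈ Λ.leaves, ¬ Cross K.c1 c ∧ ¬ Cross K.c2 c

/-- Convergence of a sequence of laminations: the sets of leaves converge in the
Hausdorff metric of the space of chords. -/
def LamTendsto (Λi : ℕ → Lamination) (Λ : Lamination) : Prop :=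
  ∀ ε > (0:ℝ), ∀ᶠ i in atTop,
    (∀ c ∈ (Λi i).leaves, ∃ c' ∈ Λ.leaves, chordDist c c' < ε) ∧
    (∀ c' ∈ Λ.leaves, ∃ c ∈ (Λi i).leaves, chordDist c c' < ε)

/-- The iterated `σ_d`-pullbacks of a chord `l` inside `Λ`. -/
def pullbackSet (d : ℕ) (Λ : Lamination) (l : Chord) : Set Chord :=
  {c | c ∈ Λ.leaves ∧ ∃ n : ℕ, (chordMap d)^[n] c = l}

/-- `𝒢(l)`: all iterated pullbacks of `l` in `Λ` together with all nondegenerate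
forward images of `l`. -/
def grandOrbit (d : ℕ) (Λ : Lamination) (l : Chord) : Set Chord :=
  pullbackSet d Λ l ∪ {c | ∃ n, 1 ≤ n ∧ c = (chordMap d)^[n] l ∧ ¬ c.IsDiag}

/-- A family of chords is dense in a lamination: every leaf is the limit of chords
from the family in the Hausdorff metric. -/
def DenseIn (S : Set Chord) (Λ : Lamination) : Prop :=
  ∀ c ∈ Λ.leaves, ∀ ε > (0:ℝ), ∃ c' ∈ S, chordDist c' c < ε

/-- Convergence of critical portraits: the critical chords converge in the
Hausdorff metric. -/
def PortraitTendsto (Ki : ℕ → CritPortrait) (K : CritPortrait) : Prop :=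
  Tendsto (fun i => chordDist (Ki i).c1 K.c1) atTop (nhds 0) ∧
  Tendsto (fun i => chordDist (Ki i).c2 K.c2) atTop (nhds 0)

end

/-!
Chords converging in the Hausdorff metric have endpoints converging along a subsequence, so by
continuity of `σ_d` the limit chords still have a common image. Suppose two limit chords
`ℓ = s(a, b)` and `ℓ' = s(a', b')` meet. As `ℓ` is not critical, `d • a ≠ d • b`, so we may label
`ℓ'` with `d • a = d • a'` and `d • b = d • b'`, and the approximating siblings are eventually
paired the same way. If `a = a'`, the approximating endpoints differ by `d`-torsion tending to `0`,
so they eventually coincide and the siblings are not disjoint. Hence the four endpoints are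
distinct, the limit chords cross transversally at an interior point, and such a crossing survives
small perturbations, again contradicting disjointness.
-/

open Topology

section StrictConvex

variable {E : Type*} [NormedAddCommGroup E] [NormedSpace ℝ E] [StrictConvexSpace ℝ E]
  {x y z : E} {r : ℝ}

theorem eq_or_eq_of_mem_segment_of_norm_eq (hx : ‖x‖ = r) (hy : ‖y‖ = r) (hz : ‖z‖ = r)
    (hzs : z ∈ segment ℝ x y) : z = x ∨ z = y := by
  by_contra! h
  have hxy : x ≠ y := by
    rintro rfl
    rw [segment_same] at hzs
    exact h.1 hzs
  have hball := openSegment_subset_ball_of_ne (z := 0) (by simpa using hx.le) (by simpa using hy.le)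
    hxy (mem_openSegment_of_ne_left_right h.1.symm h.2.symm hzs)
  rw [mem_ball_zero_iff, hz] at hball
  exact hball.false

theorem eq_or_eq_of_mem_affineSpan_pair_of_norm_eq (hx : ‖x‖ = r) (hy : ‖y‖ = r)
    (hz : ‖z‖ = r) (hxy : x ≠ y) (hzl : z ∈ line[ℝ, x, y]) : z = x ∨ z = y := by
  rcases (collinear_insert_of_mem_affineSpan_pair hzl).wbtw_or_wbtw_or_wbtw with h | h | h
  · rcases eq_or_eq_of_mem_segment_of_norm_eq hz hy hx h.mem_segment with h | h
    · exact Or.inl h.symm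
    · exact absurd h hxy
  · rcases eq_or_eq_of_mem_segment_of_norm_eq hx hz hy h.mem_segment with h | h
    · exact absurd h.symm hxy
    · exact Or.inr h.symm
  · exact (eq_or_eq_of_mem_segment_of_norm_eq hy hx hz h.mem_segment).symm

end StrictConvex

def cross (v w : ℂ) : ℝ := v.re * w.im - v.im * w.re

theorem continuous_cross : Continuous fun p : ℂ × ℂ => cross p.1 p.2 := by
  unfold cross; fun_prop

theorem Filter.Tendsto.cross {α : Type*} {l : Filter α} {f g : α → ℂ} {v w : ℂ}
    (hf : Tendsto f l (𝓝 v)) (hg : Tendsto g l (𝓝 w)) :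
    Tendsto (fun n => cross (f n) (g n)) l (𝓝 (cross v w)) :=
  (continuous_cross.tendsto (v, w)).comp (hf.prodMk_nhds hg)

/-- Cramer's rule. -/
theorem cross_div_smul_sub_cross_div_smul {v w : ℂ} (h : cross v w ≠ 0) (c : ℂ) :
    (cross c w / cross v w) • v - (cross c v / cross v w) • w = c := by
  unfold cross at *
  apply Complex.ext <;>
    simp only [Complex.sub_re, Complex.sub_im, Complex.real_smul, Complex.mul_re, Complex.mul_im,
      Complex.ofReal_re, Complex.ofReal_im, zero_mul, sub_zero, add_zero] <;>
    rw [div_mul_eq_mul_div, div_mul_eq_mul_div, ← sub_div, div_eq_iff h] <;> ring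

theorem eq_cross_div_of_smul_sub_smul {v w c : ℂ} {t u : ℝ} (h : cross v w ≠ 0)
    (htu : t • v - u • w = c) : t = cross c w / cross v w ∧ u = cross c v / cross v w := by
  subst htu
  constructor <;>
  · rw [eq_div_iff h]
    unfold cross
    simp only [Complex.sub_re, Complex.sub_im, Complex.smul_re, Complex.smul_im, smul_eq_mul]
    ring

theorem exists_eq_smul_of_cross_eq_zero {v w : ℂ} (hv : v ≠ 0) (h : cross v w = 0) :
    ∃ μ : ℝ, w = μ • v := by
  have hv2 : v.re * v.re + v.im * v.im ≠ 0 := by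
    rwa [← Complex.normSq_apply, Ne, Complex.normSq_eq_zero]
  refine ⟨(w.re * v.re + w.im * v.im) / (v.re * v.re + v.im * v.im), ?_⟩
  unfold cross at h
  apply Complex.ext
  · rw [Complex.smul_re, smul_eq_mul, div_mul_eq_mul_div, eq_div_iff hv2]
    linear_combination (-v.im) * h
  · rw [Complex.smul_im, smul_eq_mul, div_mul_eq_mul_div, eq_div_iff hv2]
    linear_combination v.re * h

section SegmentIntersection

variable {α : Type*} {l : Filter α} {A B R S : ℂ} {An Bn Rn Sn : α → ℂ}

/-- The crossing parameters solve a linear system with nonzero determinant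
`cross (B - A) (S - R)`, so they depend continuously on the endpoints. -/
theorem eventually_segment_inter_nonempty (hA : Tendsto An l (𝓝 A)) (hB : Tendsto Bn l (𝓝 B))
    (hR : Tendsto Rn l (𝓝 R)) (hS : Tendsto Sn l (𝓝 S)) (hdet : cross (B - A) (S - R) ≠ 0)
    {z : ℂ} (hzAB : z ∈ openSegment ℝ A B) (hzRS : z ∈ openSegment ℝ R S) :
    ∀ᶠ n in l, (segment ℝ (An n) (Bn n) ∩ segment ℝ (Rn n) (Sn n)).Nonempty := by
  rw [openSegment_eq_image'] at hzAB hzRS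
  obtain ⟨t, ht, rfl⟩ := hzAB
  obtain ⟨u, hu, hz⟩ := hzRS
  obtain ⟨rfl, rfl⟩ := eq_cross_div_of_smul_sub_smul hdet
    (show t • (B - A) - u • (S - R) = R - A by linear_combination (norm := module) -hz)
  have hdetn := (hB.sub hA).cross (hS.sub hR)
  have htn := ((hR.sub hA).cross (hS.sub hR)).div hdetn hdet
  have hun := ((hR.sub hA).cross (hB.sub hA)).div hdetn hdet
  filter_upwards [hdetn.eventually_ne hdet, htn (Ioo_mem_nhds ht.1 ht.2),
    hun (Ioo_mem_nhds hu.1 hu.2)] with n hdet' htn' hun'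
  rw [Set.mem_preimage, Pi.div_apply] at htn' hun'
  have hcramer := cross_div_smul_sub_cross_div_smul hdet' (Rn n - An n)
  rw [segment_eq_image', segment_eq_image']
  exact ⟨_, ⟨_, Ioo_subset_Icc_self htn', rfl⟩,
    ⟨_, Ioo_subset_Icc_self hun', by linear_combination (norm := module) -hcramer⟩⟩

theorem cross_sub_ne_zero_of_norm_eq_one {z : ℂ} (hA : ‖A‖ = 1) (hB : ‖B‖ = 1) (hR : ‖R‖ = 1)
    (hAB : A ≠ B) (hRA : R ≠ A) (hRB : R ≠ B) (hzAB : z ∈ segment ℝ A B)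
    (hzRS : z ∈ segment ℝ R S) : cross (B - A) (S - R) ≠ 0 := by
  intro h
  obtain ⟨μ, hμ⟩ := exists_eq_smul_of_cross_eq_zero (sub_ne_zero.2 hAB.symm) h
  rw [segment_eq_image'] at hzAB hzRS
  obtain ⟨t, -, rfl⟩ := hzAB
  obtain ⟨u, -, hz⟩ := hzRS
  have hRline : R = AffineMap.lineMap A B (t - u * μ) := by
    rw [AffineMap.lineMap_apply_module', hμ] at *
    linear_combination (norm := module) hz
  rcases eq_or_eq_of_mem_affineSpan_pair_of_norm_eq hA hB hR hAB
    (hRline ▸ AffineMap.lineMap_mem_affineSpan_pair _ _ _) with h | h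
  exacts [hRA h, hRB h]

theorem eventually_segment_inter_nonempty_of_norm_eq_one (hA : Tendsto An l (𝓝 A))
    (hB : Tendsto Bn l (𝓝 B)) (hR : Tendsto Rn l (𝓝 R)) (hS : Tendsto Sn l (𝓝 S))
    (hA1 : ‖A‖ = 1) (hB1 : ‖B‖ = 1) (hR1 : ‖R‖ = 1) (hS1 : ‖S‖ = 1)
    (hAR : A ≠ R) (hAS : A ≠ S) (hBR : B ≠ R) (hBS : B ≠ S)
    (h : (segment ℝ A B ∩ segment ℝ R S).Nonempty) :
    ∀ᶠ n in l, (segment ℝ (An n) (Bn n) ∩ segment ℝ (Rn n) (Sn n)).Nonempty := by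
  obtain ⟨z, hzAB, hzRS⟩ := h
  have hz_ne_of_mem {P Q X : ℂ} (hP : ‖P‖ = 1) (hQ : ‖Q‖ = 1) (hX : ‖X‖ = 1)
      (hXP : X ≠ P) (hXQ : X ≠ Q) (hzPQ : z ∈ segment ℝ P Q) : z ≠ X := by
    rintro rfl
    rcases eq_or_eq_of_mem_segment_of_norm_eq hP hQ hX hzPQ with h | h
    exacts [hXP h, hXQ h]
  have hzA := hz_ne_of_mem hR1 hS1 hA1 hAR hAS hzRS
  have hzB := hz_ne_of_mem hR1 hS1 hB1 hBR hBS hzRS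
  have hzR := hz_ne_of_mem hA1 hB1 hR1 hAR.symm hBR.symm hzAB
  have hzS := hz_ne_of_mem hA1 hB1 hS1 hAS.symm hBS.symm hzAB
  have hAB : A ≠ B := by
    rintro rfl
    rw [segment_same] at hzAB
    exact hzA hzAB
  exact eventually_segment_inter_nonempty hA hB hR hS
    (cross_sub_ne_zero_of_norm_eq_one hA1 hB1 hR1 hAB hAR.symm hBR.symm hzAB hzRS)
    (mem_openSegment_of_ne_left_right hzA.symm hzB.symm hzAB)
    (mem_openSegment_of_ne_left_right hzR.symm hzS.symm hzRS)

end SegmentIntersection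

theorem norm_anglePoint (a : Angle) : ‖anglePoint a‖ = 1 :=
  Circle.norm_coe _

theorem continuous_anglePoint : Continuous anglePoint :=
  continuous_subtype_val.comp AddCircle.continuous_toCircle

theorem anglePoint_injective : Function.Injective anglePoint :=
  fun _ _ h => AddCircle.injective_toCircle one_ne_zero (Subtype.ext h)

theorem chordSet_mk (a b : Angle) :
    chordSet s(a, b) = segment ℝ (anglePoint a) (anglePoint b) := rfl

theorem chordMap_mk (d : ℕ) (a b : Angle) : chordMap d s(a, b) = s(d • a, d • b) := rfl

theorem isCompact_chordSet (c : Chord) : IsCompact (chordSet c) := by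
  induction c using Sym2.ind with
  | _ a b =>
    rw [chordSet_mk, segment_eq_image_lineMap]
    exact isCompact_Icc.image (AffineMap.lineMap_continuous)

theorem chordSet_nonempty (c : Chord) : (chordSet c).Nonempty := by
  induction c using Sym2.ind with
  | _ a b => exact ⟨_, left_mem_segment ℝ _ _⟩

theorem chordSet_injective : Function.Injective chordSet := by
  have endpoint_mem {a b a' b' : Angle} (h : chordSet s(a, b) = chordSet s(a', b')) :
      a' = a ∨ a' = b := by
    have ha' : anglePoint a' ∈ chordSet s(a, b) := h ▸ left_mem_segment ℝ _ _
    exact (eq_or_eq_of_mem_segment_of_norm_eq (norm_anglePoint a) (norm_anglePoint b)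
      (norm_anglePoint a') ha').imp (@anglePoint_injective _ _) (@anglePoint_injective _ _)
  intro c₁ c₂ h
  induction c₁ using Sym2.ind with | _ a b =>
  induction c₂ using Sym2.ind with | _ a' b' =>
  have hswap (x y : Angle) : chordSet s(x, y) = chordSet s(y, x) := by rw [Sym2.eq_swap]
  have h₁ := endpoint_mem h
  have h₂ := endpoint_mem (h.trans (hswap a' b'))
  have h₃ := endpoint_mem h.symm
  have h₄ := endpoint_mem (h.symm.trans (hswap a b))
  rw [Sym2.eq_iff]
  tauto

theorem hausdorffDist_segment_le {E : Type*} [SeminormedAddCommGroup E] [NormedSpace ℝ E]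
    (x y x' y' : E) :
    hausdorffDist (segment ℝ x y) (segment ℝ x' y') ≤ max (dist x x') (dist y y') := by
  have hcombo {a b : ℝ} (ha : 0 ≤ a) (hb : 0 ≤ b) (hab : a + b = 1) :
      dist (a • x + b • y) (a • x' + b • y') ≤ max (dist x x') (dist y y') :=
    calc dist (a • x + b • y) (a • x' + b • y')
        ≤ a * dist x x' + b * dist y y' := by
          simpa only [dist_smul₀, Real.norm_of_nonneg ha, Real.norm_of_nonneg hb] using
            dist_add_add_le (a • x) (b • y) (a • x') (b • y')
      _ ≤ a * max (dist x x') (dist y y') + b * max (dist x x') (dist y y') := by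
          gcongr
          exacts [le_max_left _ _, le_max_right _ _]
      _ = max (dist x x') (dist y y') := by rw [← add_mul, hab, one_mul]
  apply hausdorffDist_le_of_mem_dist (le_max_of_le_left dist_nonneg)
  · rintro _ ⟨a, b, ha, hb, hab, rfl⟩
    exact ⟨_, ⟨a, b, ha, hb, hab, rfl⟩, hcombo ha hb hab⟩
  · rintro _ ⟨a, b, ha, hb, hab, rfl⟩
    exact ⟨_, ⟨a, b, ha, hb, hab, rfl⟩, by rw [dist_comm]; exact hcombo ha hb hab⟩

theorem hausdorffEDist_chordSet_ne_top (c₁ c₂ : Chord) :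
    hausdorffEDist (chordSet c₁) (chordSet c₂) ≠ ⊤ :=
  hausdorffEDist_ne_top_of_nonempty_of_bounded (chordSet_nonempty c₁) (chordSet_nonempty c₂)
    (isCompact_chordSet c₁).isBounded (isCompact_chordSet c₂).isBounded

theorem eq_of_chordDist_eq_zero {c₁ c₂ : Chord} (h : chordDist c₁ c₂ = 0) : c₁ = c₂ := by
  rw [chordDist, hausdorffDist, ENNReal.toReal_eq_zero_iff] at h
  exact chordSet_injective (((isCompact_chordSet c₁).isClosed.hausdorffEDist_zero_iff
    (isCompact_chordSet c₂).isClosed).1 (h.resolve_right (hausdorffEDist_chordSet_ne_top _ _)))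

theorem eq_of_tendsto_chordDist {α : Type*} {l : Filter α} [l.NeBot] {c : α → Chord}
    {c₁ c₂ : Chord} (h₁ : Tendsto (fun n => chordDist (c n) c₁) l (𝓝 0))
    (h₂ : Tendsto (fun n => chordDist (c n) c₂) l (𝓝 0)) : c₁ = c₂ := by
  have hle (n : α) : chordDist c₁ c₂ ≤ chordDist (c n) c₁ + chordDist (c n) c₂ := by
    unfold chordDist
    rw [hausdorffDist_comm (s := chordSet (c n))]
    exact hausdorffDist_triangle (hausdorffEDist_chordSet_ne_top _ _)
  refine eq_of_chordDist_eq_zero (le_antisymm ?_ hausdorffDist_nonneg)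
  simpa using ge_of_tendsto (h₁.add h₂) (Eventually.of_forall hle)

theorem tendsto_chordDist_mk {α : Type*} {l : Filter α} {p q : α → Angle} {a b : Angle}
    (hp : Tendsto p l (𝓝 a)) (hq : Tendsto q l (𝓝 b)) :
    Tendsto (fun n => chordDist s(p n, q n) s(a, b)) l (𝓝 0) := by
  have hdist {x : α → Angle} {y : Angle} (hx : Tendsto x l (𝓝 y)) :
      Tendsto (fun n => dist (anglePoint (x n)) (anglePoint y)) l (𝓝 0) :=
    tendsto_iff_dist_tendsto_zero.1 ((continuous_anglePoint.tendsto y).comp hx)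
  refine squeeze_zero (fun _ => hausdorffDist_nonneg) (fun n => hausdorffDist_segment_le _ _ _ _) ?_
  simpa using (hdist hp).max (hdist hq)

theorem exists_subseq_endpoints_tendsto {c : ℕ → Chord} {a b : Angle}
    (h : Tendsto (fun n => chordDist (c n) s(a, b)) atTop (𝓝 0)) :
    ∃ φ : ℕ → ℕ, StrictMono φ ∧ ∃ p q : ℕ → Angle, (∀ n, c (φ n) = s(p n, q n)) ∧
      Tendsto p atTop (𝓝 a) ∧ Tendsto q atTop (𝓝 b) := by
  have hrep (e : Chord) : ∃ x : Angle × Angle, e = s(x.1, x.2) := by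
    induction e using Sym2.ind with | _ a b => exact ⟨(a, b), rfl⟩
  choose x hx using fun n => hrep (c n)
  obtain ⟨⟨a', b'⟩, φ, hφ, hxφ⟩ := CompactSpace.tendsto_subseq x
  have hp := (continuous_fst.tendsto _).comp hxφ
  have hq := (continuous_snd.tendsto _).comp hxφ
  have hlim : s(a', b') = s(a, b) := by
    refine eq_of_tendsto_chordDist (c := c ∘ φ) ?_ (h.comp hφ.tendsto_atTop)
    simpa only [Function.comp_def, hx] using tendsto_chordDist_mk hp hq
  refine ⟨φ, hφ, ?_⟩
  rcases Sym2.eq_iff.1 hlim with ⟨rfl, rfl⟩ | ⟨rfl, rfl⟩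
  · exact ⟨_, _, fun n => hx (φ n), hp, hq⟩
  · exact ⟨_, _, fun n => (hx (φ n)).trans Sym2.eq_swap, hq, hp⟩

theorem eventually_eq_of_tendsto_of_nsmul_eq {G α : Type*} [AddCommGroup G] [TopologicalSpace G]
    [IsTopologicalAddGroup G] [T1Space G] {d : ℕ} (hfin : {z : G | d • z = 0}.Finite)
    {l : Filter α} {u v : α → G} {x : G} (hu : Tendsto u l (𝓝 x)) (hv : Tendsto v l (𝓝 x))
    (huv : ∀ᶠ n in l, d • u n = d • v n) : ∀ᶠ n in l, u n = v n := by
  have hnhds : ({z : G | d • z = 0} \ {0})ᶜ ∈ 𝓝 (0 : G) :=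
    (hfin.subset sdiff_subset).isClosed.isOpen_compl.mem_nhds (by simp)
  have hsub : Tendsto (fun n => u n - v n) l (𝓝 0) := by simpa using hu.sub hv
  filter_upwards [hsub hnhds, huv] with n hn hduv
  by_contra hne
  exact hn ⟨by simp [smul_sub, hduv], sub_ne_zero.2 hne⟩

theorem exists_subseq_endpoints_tendsto₂ {c c' : ℕ → Chord} {a b a' b' : Angle}
    (h : Tendsto (fun n => chordDist (c n) s(a, b)) atTop (𝓝 0))
    (h' : Tendsto (fun n => chordDist (c' n) s(a', b')) atTop (𝓝 0)) :
    ∃ φ : ℕ → ℕ, ∃ p q p' q' : ℕ → Angle,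
      (∀ n, c (φ n) = s(p n, q n)) ∧ (∀ n, c' (φ n) = s(p' n, q' n)) ∧
      Tendsto p atTop (𝓝 a) ∧ Tendsto q atTop (𝓝 b) ∧
      Tendsto p' atTop (𝓝 a') ∧ Tendsto q' atTop (𝓝 b') := by
  obtain ⟨φ, hφ, p, q, hc, hp, hq⟩ := exists_subseq_endpoints_tendsto h
  obtain ⟨ψ, hψ, p', q', hc', hp', hq'⟩ :=
    exists_subseq_endpoints_tendsto (c := c' ∘ φ) (h'.comp hφ.tendsto_atTop)
  exact ⟨φ ∘ ψ, p ∘ ψ, q ∘ ψ, p', q', fun n => hc (ψ n), hc',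
    hp.comp hψ.tendsto_atTop, hq.comp hψ.tendsto_atTop, hp', hq'⟩

theorem chordMap_eq_of_tendsto (d : ℕ) {c c' : ℕ → Chord} {e e' : Chord}
    (himg : ∀ n, chordMap d (c n) = chordMap d (c' n))
    (h : Tendsto (fun n => chordDist (c n) e) atTop (𝓝 0))
    (h' : Tendsto (fun n => chordDist (c' n) e') atTop (𝓝 0)) :
    chordMap d e = chordMap d e' := by
  induction e using Sym2.ind with | _ a b =>
  induction e' using Sym2.ind with | _ a' b' =>
  obtain ⟨φ, p, q, p', q', hc, hc', hp, hq, hp', hq'⟩ := exists_subseq_endpoints_tendsto₂ h h'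
  have hσ (x : Angle) := (continuous_nsmul (M := Angle) d).tendsto x
  refine eq_of_tendsto_chordDist (l := atTop) (c := fun n => chordMap d (c (φ n))) ?_ ?_
  · simpa only [hc, chordMap_mk, Function.comp_apply] using
      tendsto_chordDist_mk ((hσ a).comp hp) ((hσ b).comp hq)
  · simpa only [himg, hc', chordMap_mk, Function.comp_apply] using
      tendsto_chordDist_mk ((hσ a').comp hp') ((hσ b').comp hq')

theorem eventually_nsmul_eq_of_chordMap_eq {α : Type*} {l : Filter α} {d : ℕ}
    {p q p' q' : α → Angle} {a b b' : Angle} (hp : Tendsto p l (𝓝 a))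
    (hq' : Tendsto q' l (𝓝 b')) (hab : d • a ≠ d • b) (hbb' : d • b = d • b')
    (himg : ∀ n, chordMap d s(p n, q n) = chordMap d s(p' n, q' n)) :
    ∀ᶠ n in l, d • p n = d • p' n ∧ d • q n = d • q' n := by
  have hσ (x : Angle) := (continuous_nsmul (M := Angle) d).tendsto x
  have hsub := ((hσ a).comp hp).sub (hbb' ▸ (hσ b').comp hq')
  filter_upwards [hsub.eventually_ne (sub_ne_zero.2 hab)] with n hn
  have hn' := himg n
  rw [chordMap_mk, chordMap_mk, Sym2.eq_iff] at hn'
  exact hn'.resolve_right fun h => hn (sub_eq_zero.2 h.1)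

/-- The `d`-torsion of the circle is discrete, so `u` and `v` eventually coincide. -/
theorem not_forall_disjoint_of_tendsto_of_nsmul_eq {α : Type*} {l : Filter α} [l.NeBot] {d : ℕ}
    (hd : 0 < d) {c c' : α → Chord} {u v : α → Angle} {x : Angle} (hu : Tendsto u l (𝓝 x))
    (hv : Tendsto v l (𝓝 x)) (huv : ∀ᶠ n in l, d • u n = d • v n)
    (hmem : ∀ n, anglePoint (u n) ∈ chordSet (c n))
    (hmem' : ∀ n, anglePoint (v n) ∈ chordSet (c' n)) :
    ¬ ∀ n, Disjoint (chordSet (c n)) (chordSet (c' n)) := by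
  intro hdisj
  obtain ⟨n, hn⟩ :=
    (eventually_eq_of_tendsto_of_nsmul_eq (AddCircle.finite_torsion 1 hd) hu hv huv).exists
  exact Set.disjoint_left.1 (hdisj n) (hmem n) (hn ▸ hmem' n)

theorem disjoint_chordSet_of_tendsto {α : Type*} {l : Filter α} [l.NeBot] {d : ℕ}
    {p q p' q' : α → Angle} {a b a' b' : Angle} (hp : Tendsto p l (𝓝 a))
    (hq : Tendsto q l (𝓝 b)) (hp' : Tendsto p' l (𝓝 a')) (hq' : Tendsto q' l (𝓝 b'))
    (hab : d • a ≠ d • b) (haa' : d • a = d • a') (hbb' : d • b = d • b')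
    (himg : ∀ n, chordMap d s(p n, q n) = chordMap d s(p' n, q' n))
    (hdisj : ∀ n, Disjoint (chordSet s(p n, q n)) (chordSet s(p' n, q' n))) :
    Disjoint (chordSet s(a, b)) (chordSet s(a', b')) := by
  have hd : 0 < d := Nat.pos_of_ne_zero (by rintro rfl; simp at hab)
  have hpaired := eventually_nsmul_eq_of_chordMap_eq hp hq' hab hbb' himg
  have ha : a ≠ a' := by
    rintro rfl
    exact not_forall_disjoint_of_tendsto_of_nsmul_eq hd hp hp' (hpaired.mono fun _ h => h.1)
      (fun _ => left_mem_segment ℝ _ _) (fun _ => left_mem_segment ℝ _ _) hdisj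
  have hb : b ≠ b' := by
    rintro rfl
    exact not_forall_disjoint_of_tendsto_of_nsmul_eq hd hq hq' (hpaired.mono fun _ h => h.2)
      (fun _ => right_mem_segment ℝ _ _) (fun _ => right_mem_segment ℝ _ _) hdisj
  have hab' : a ≠ b' := by
    rintro rfl
    exact hab hbb'.symm
  have hba' : b ≠ a' := by
    rintro rfl
    exact hab haa'
  have hpt {u : α → Angle} {x : Angle} (hu : Tendsto u l (𝓝 x)) :=
    (continuous_anglePoint.tendsto x).comp hu
  by_contra hmeet
  obtain ⟨n, hn⟩ := (eventually_segment_inter_nonempty_of_norm_eq_one (hpt hp) (hpt hq)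
    (hpt hp') (hpt hq') (norm_anglePoint a) (norm_anglePoint b) (norm_anglePoint a')
    (norm_anglePoint b') (anglePoint_injective.ne ha) (anglePoint_injective.ne hab')
    (anglePoint_injective.ne hba') (anglePoint_injective.ne hb)
    (Set.not_disjoint_iff_nonempty_inter.1 hmeet)).exists
  exact Set.not_disjoint_iff_nonempty_inter.2 hn (hdisj n)

theorem disjoint_chordSet_of_tendsto_of_not_critical {d : ℕ} {c c' : ℕ → Chord} {e e' : Chord}
    (he : ¬ ChordCritical d e) (himg : ∀ n, chordMap d (c n) = chordMap d (c' n))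
    (hdisj : ∀ n, Disjoint (chordSet (c n)) (chordSet (c' n)))
    (h : Tendsto (fun n => chordDist (c n) e) atTop (𝓝 0))
    (h' : Tendsto (fun n => chordDist (c' n) e') atTop (𝓝 0)) :
    Disjoint (chordSet e) (chordSet e') := by
  have hlim := chordMap_eq_of_tendsto d himg h h'
  induction e using Sym2.ind with | _ a b =>
  induction e' using Sym2.ind with | _ a' b' =>
  obtain ⟨φ, p, q, p', q', hc, hc', hp, hq, hp', hq'⟩ := exists_subseq_endpoints_tendsto₂ h h'
  rw [ChordCritical, chordMap_mk, Sym2.mk_isDiag_iff] at he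
  rw [chordMap_mk, chordMap_mk, Sym2.eq_iff] at hlim
  rcases hlim with ⟨haa', hbb'⟩ | ⟨hab', hba'⟩
  · exact disjoint_chordSet_of_tendsto hp hq hp' hq' he haa' hbb'
      (fun n => hc n ▸ hc' n ▸ himg (φ n)) (fun n => hc n ▸ hc' n ▸ hdisj (φ n))
  · rw [Sym2.eq_swap (a := a')]
    have hc'' (n : ℕ) : c' (φ n) = s(q' n, p' n) := (hc' n).trans Sym2.eq_swap
    exact disjoint_chordSet_of_tendsto hp hq hq' hp' he hab' hba'
      (fun n => hc n ▸ hc'' n ▸ himg (φ n)) (fun n => hc n ▸ hc'' n ▸ hdisj (φ n))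

/-- a Hausdorff limit of full sibling collections whose first chord is
not critical is a full sibling collection. -/
theorem stmt2 (d : ℕ) (hd : 2 ≤ d) (L : ℕ → Fin d → Chord)
    (hL : ∀ i, FullSibling d (L i)) (l : Fin d → Chord)
    (hconv : ∀ j : Fin d, Tendsto (fun i => chordDist (L i j) (l j)) atTop (nhds 0))
    (hnc : ¬ ChordCritical d (l ⟨0, by omega⟩)) :
    FullSibling d l := by
  have himg (i j : Fin d) : chordMap d (l i) = chordMap d (l j) :=
    chordMap_eq_of_tendsto d (fun n => (hL n).2 i j) (hconv i) (hconv j)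
  refine ⟨fun i j hij => ?_, himg⟩
  have hi : ¬ ChordCritical d (l i) := by rwa [ChordCritical, himg i ⟨0, by omega⟩]
  exact disjoint_chordSet_of_tendsto_of_not_critical hi (fun n => (hL n).2 i j)
    (fun n => (hL n).1 i j hij) (hconv i) (hconv j)
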